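/- For every x ∈ ℝ³ with 0 < ‖x‖ < π, letting E = exp(hat(x)) and e_R = (1 / (2·√(1 + tr E))) • vee(E − Eᵀ), one has ‖e_R‖ = sin(‖x‖/2); in particular ‖e_R‖² = sin²(‖x‖/2). -/

import Mathlib

open Matrix Real

/-- The hat map sending `x ∈ ℝ³` to the skew-symmetric matrix with `hat x *ᵥ y = x ×₃ y`. -/
def hat (x : Fin 3 → ℝ) : Matrix (Fin 3) (Fin 3) ℝ :=
  !![0, -x 2, x 1; x 2, 0, -x 0; -x 1, x 0, 0]

/-- The vee map, inverse to `hat` on skew-symmetric matrices. -/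
def vee (S : Matrix (Fin 3) (Fin 3) ℝ) : Fin 3 → ℝ :=
  ![S 2 1, S 0 2, S 1 0]

/-- The Euclidean norm on ℝ³. -/
noncomputable def enorm3 (x : Fin 3 → ℝ) : ℝ := Real.sqrt (∑ i, x i ^ 2)

/-!
If `u ^ 3 = -u`, the even and odd parts of the exponential series of `t • u` are the cosine
and sine series, which gives Rodrigues' formula
`exp (t • u) = 1 + sin t • u + (1 - cos t) • u ^ 2`.
Writing `x = θ • n` with `‖n‖ = 1`, the matrix `hat n` satisfies `u ^ 3 = -u`, so
`tr E = 1 + 2 cos θ` and `E - Eᵀ = 2 sin θ • hat n`. For `θ < π` this gives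
`√(1 + tr E) = 2 cos (θ/2)`, and the double-angle formula for `sin θ` turns `e_R` into
`sin (θ/2) • n`.
-/

open scoped Nat

section Rodrigues

variable {R : Type*} [Ring R] {u : R}

theorem pow_two_mul_add_one_of_pow_three_eq_neg (hu : u ^ 3 = -u) (k : ℕ) :
    u ^ (2 * k + 1) = (-1) ^ k * u := by
  induction k with
  | zero => simp
  | succ k ih =>
    rw [show 2 * (k + 1) + 1 = 2 * k + 1 + 2 by ring, pow_add, ih, mul_assoc,
      ← pow_succ' u 2, hu, pow_succ, mul_neg_one, neg_mul, mul_neg]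

theorem pow_two_mul_add_two_of_pow_three_eq_neg (hu : u ^ 3 = -u) (k : ℕ) :
    u ^ (2 * k + 2) = (-1) ^ k * u ^ 2 := by
  rw [pow_succ, pow_two_mul_add_one_of_pow_three_eq_neg hu, mul_assoc, ← sq]

variable {𝔸 : Type*} [NormedRing 𝔸] [NormedAlgebra ℝ 𝔸] [CompleteSpace 𝔸] {u : 𝔸}

theorem exp_smul_of_pow_three_eq_neg (hu : u ^ 3 = -u) (t : ℝ) :
    NormedSpace.exp (t • u) = 1 + sin t • u + (1 - cos t) • u ^ 2 := by
  have hsign (k : ℕ) (v : 𝔸) : (-1 : 𝔸) ^ k * v = ((-1 : ℝ) ^ k) • v := by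
    simp [Algebra.smul_def]
  have heven : HasSum (fun k : ℕ => ((2 * k)! : ℝ)⁻¹ • (t • u) ^ (2 * k))
      ((1 + u ^ 2) - cos t • u ^ 2) := by
    -- `u ^ (2k) = [k = 0] (1 + u²) - (-1)^k u²` lets the `k = 0` term join the cosine series.
    refine ((hasSum_ite_eq 0 (1 + u ^ 2)).sub ((Real.hasSum_cos t).smul_const (u ^ 2))).congr_fun ?_
    rintro (_ | k)
    · simp
    · rw [smul_pow, smul_smul, show 2 * (k + 1) = 2 * k + 2 by ring,
        pow_two_mul_add_two_of_pow_three_eq_neg hu, hsign, smul_smul, if_neg k.succ_ne_zero,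
        zero_sub, ← neg_smul]
      congr 1
      field_simp
      ring
  have hodd : HasSum (fun k : ℕ => ((2 * k + 1)! : ℝ)⁻¹ • (t • u) ^ (2 * k + 1))
      (sin t • u) := by
    refine ((Real.hasSum_sin t).smul_const u).congr_fun fun k => ?_
    rw [smul_pow, smul_smul, pow_two_mul_add_one_of_pow_three_eq_neg hu, hsign, smul_smul]
    congr 1
    field_simp
  refine (NormedSpace.exp_series_hasSum_exp' (𝕂 := ℝ) (t • u)).unique ?_
  convert HasSum.even_add_odd (f := fun n => (n ! : ℝ)⁻¹ • (t • u) ^ n) heven hodd using 1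
  module

end Rodrigues

section Hat

theorem sq_enorm3 (x : Fin 3 → ℝ) : enorm3 x ^ 2 = ∑ i, x i ^ 2 :=
  sq_sqrt (by positivity)

theorem enorm3_smul (c : ℝ) (x : Fin 3 → ℝ) : enorm3 (c • x) = |c| * enorm3 x := by
  rw [enorm3, enorm3, ← sqrt_sq_eq_abs, ← sqrt_mul (sq_nonneg c), Finset.mul_sum]
  simp only [Pi.smul_apply, smul_eq_mul, mul_pow]

theorem hat_smul (c : ℝ) (x : Fin 3 → ℝ) : hat (c • x) = c • hat x := by
  ext i j
  fin_cases i <;> fin_cases j <;> simp [hat]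

theorem hat_transpose (x : Fin 3 → ℝ) : (hat x)ᵀ = -hat x := by
  ext i j
  fin_cases i <;> fin_cases j <;> simp [hat]

theorem vee_hat (x : Fin 3 → ℝ) : vee (hat x) = x := by
  funext i
  fin_cases i <;> simp [vee, hat]

theorem trace_hat (x : Fin 3 → ℝ) : (hat x).trace = 0 := by
  simp [trace_fin_three, hat]

theorem trace_hat_sq (x : Fin 3 → ℝ) : (hat x ^ 2).trace = -2 * enorm3 x ^ 2 := by
  rw [sq_enorm3]
  simp [trace_fin_three, sq, hat, Fin.sum_univ_three]
  ring

theorem hat_pow_three (x : Fin 3 → ℝ) : hat x ^ 3 = -(enorm3 x ^ 2) • hat x := by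
  rw [sq_enorm3]
  ext i j
  fin_cases i <;> fin_cases j <;>
    simp [hat, pow_succ, mul_apply, Fin.sum_univ_three] <;> ring

variable {n : Fin 3 → ℝ}

theorem exp_smul_hat (hn : enorm3 n = 1) (t : ℝ) :
    NormedSpace.exp (t • hat n) = 1 + sin t • hat n + (1 - cos t) • hat n ^ 2 := by
  -- `exp` does not depend on the norm; any complete algebra norm makes the series available.
  let := Matrix.linftyOpNormedRing (n := Fin 3) (α := ℝ)
  let := Matrix.linftyOpNormedAlgebra (n := Fin 3) (R := ℝ) (α := ℝ)
  exact exp_smul_of_pow_three_eq_neg (by rw [hat_pow_three, hn, one_pow, neg_one_smul]) t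

theorem trace_exp_smul_hat (hn : enorm3 n = 1) (t : ℝ) :
    (NormedSpace.exp (t • hat n)).trace = 1 + 2 * cos t := by
  simp only [exp_smul_hat hn, trace_add, trace_smul, trace_one, trace_hat, trace_hat_sq, hn,
    Fintype.card_fin, smul_eq_mul]
  push_cast
  ring

theorem vee_exp_smul_hat_sub_transpose (hn : enorm3 n = 1) (t : ℝ) :
    vee (NormedSpace.exp (t • hat n) - (NormedSpace.exp (t • hat n))ᵀ)
      = (2 * sin t) • n := by
  have hskew : NormedSpace.exp (t • hat n) - (NormedSpace.exp (t • hat n))ᵀ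
      = hat ((2 * sin t) • n) := by
    rw [← Matrix.exp_transpose, transpose_smul, hat_transpose, smul_neg, ← neg_smul,
      exp_smul_hat hn, exp_smul_hat hn, sin_neg, cos_neg, hat_smul]
    module
  rw [hskew, vee_hat]

end Hat

noncomputable def rotationErrorVector (E : Matrix (Fin 3) (Fin 3) ℝ) : Fin 3 → ℝ :=
  (1 / (2 * √(1 + E.trace))) • vee (E - Eᵀ)

theorem rotationErrorVector_exp_smul_hat {n : Fin 3 → ℝ} {θ : ℝ} (hn : enorm3 n = 1)
    (hθ : 0 < cos (θ / 2)) :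
    rotationErrorVector (NormedSpace.exp (θ • hat n)) = sin (θ / 2) • n := by
  have hcos : cos θ = 2 * cos (θ / 2) ^ 2 - 1 := by rw [← cos_two_mul]; ring_nf
  have hsin : sin θ = 2 * sin (θ / 2) * cos (θ / 2) := by rw [← sin_two_mul]; ring_nf
  have hsqrt : √(1 + (1 + 2 * cos θ)) = 2 * cos (θ / 2) := by
    rw [← sqrt_sq (by positivity : 0 ≤ 2 * cos (θ / 2)), hcos]
    ring_nf
  rw [rotationErrorVector, trace_exp_smul_hat hn, vee_exp_smul_hat_sub_transpose hn, smul_smul,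
    hsqrt, hsin]
  congr 1
  field_simp

/-- The rotation error vector `e_R` of `E = exp (hat x)` has norm `sin (‖x‖/2)`
when `0 < ‖x‖ < π`; in particular `‖e_R‖² = sin² (‖x‖/2)`. -/
theorem norm_rotation_error_vector (x : Fin 3 → ℝ) (h0 : 0 < enorm3 x)
    (hpi : enorm3 x < Real.pi) :
    let E := NormedSpace.exp (hat x)
    let eR := (1 / (2 * Real.sqrt (1 + E.trace))) • vee (E - Eᵀ)
    enorm3 eR = Real.sin (enorm3 x / 2) ∧ enorm3 eR ^ 2 = Real.sin (enorm3 x / 2) ^ 2 := by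
  intro E eR
  set θ := enorm3 x
  have hn : enorm3 (θ⁻¹ • x) = 1 := by
    rw [enorm3_smul, abs_inv, abs_of_pos h0, inv_mul_cancel₀ h0.ne']
  have hx : hat x = θ • hat (θ⁻¹ • x) := by
    rw [hat_smul, smul_inv_smul₀ h0.ne']
  have heR : eR = sin (θ / 2) • θ⁻¹ • x := by
    change rotationErrorVector (NormedSpace.exp (hat x)) = _
    rw [hx]
    exact rotationErrorVector_exp_smul_hat hn (cos_pos_of_mem_Ioo ⟨by linarith, by linarith⟩)
  have hnorm : enorm3 eR = sin (θ / 2) := by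
    have hsin : 0 < sin (θ / 2) := sin_pos_of_pos_of_lt_pi (by linarith) (by linarith)
    rw [heR, enorm3_smul, hn, mul_one, abs_of_pos hsin]
  exact ⟨hnorm, by rw [hnorm]⟩
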